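/- If k ≥ 2 and G is a connected graph satisfying μ(G) = μ_i(G), then μ(K_k □ G) = k·μ(G). -/

import Mathlib

open SimpleGraph

/-- Two vertices `u v ∈ X` are `X`-visible in `G`: there is a shortest `u,v`-path
whose only vertices in `X` are `u` and `v`. -/
def VisiblePair {V : Type*} (G : SimpleGraph V) (X : Set V) (u v : V) : Prop :=
  ∃ p : G.Walk u v, p.IsPath ∧ p.length = G.dist u v ∧
    ∀ w ∈ p.support, w ∈ X → w = u ∨ w = v

/-- `X` is a mutual-visibility set of `G`. -/
def IsMVSet {V : Type*} (G : SimpleGraph V) (X : Set V) : Prop :=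
  ∀ u ∈ X, ∀ v ∈ X, u ≠ v → VisiblePair G X u v

/-- `X` is an independent set of `G`. -/
def IsIndep {V : Type*} (G : SimpleGraph V) (X : Set V) : Prop :=
  ∀ u ∈ X, ∀ v ∈ X, ¬ G.Adj u v

/-- The mutual-visibility number `μ(G)`. -/
noncomputable def mu {V : Type*} (G : SimpleGraph V) : ℕ :=
  sSup {n | ∃ X : Set V, IsMVSet G X ∧ X.ncard = n}

/-- The independent mutual-visibility number `μᵢ(G)`. -/
noncomputable def muI {V : Type*} (G : SimpleGraph V) : ℕ :=
  sSup {n | ∃ X : Set V, IsMVSet G X ∧ IsIndep G X ∧ X.ncard = n}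

/-- The independence number `α(G)`. -/
noncomputable def indepNumber {V : Type*} (G : SimpleGraph V) : ℕ :=
  sSup {n | ∃ X : Set V, IsIndep G X ∧ X.ncard = n}

/-! A geodesic of `H □ G` between two vertices of the same `G`-layer never leaves that layer, so
every layer of a mutual-visibility set of `H □ G` is a mutual-visibility set of `G`; this gives
`μ(H □ G) ≤ |V(H)| μ(G)`. Conversely, if `Y` is an independent mutual-visibility set of `G`,
then `V(K_k) × Y` is a mutual-visibility set of `K_k □ G`: two copies of one vertex are adjacent,
and between `(i, u)` and `(j, v)` with `u ≠ v` one follows a visibility geodesic of `G`, switching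
layers in the fibre over the first inner vertex, which is not in `Y` since `Y` is independent.
Hence `k μᵢ(G) ≤ μ(K_k □ G)`, and `μ(G) = μᵢ(G)` closes the gap. -/

namespace SimpleGraph

variable {α β : Type*} {H : SimpleGraph α} {G : SimpleGraph β}

@[simp]
lemma Walk.length_boxProdLeft {a₁ a₂ : α} (b : β) (p : H.Walk a₁ a₂) :
    (p.boxProdLeft G b).length = p.length :=
  p.length_map _

@[simp]
lemma Walk.length_boxProdRight {b₁ b₂ : β} (a : α) (p : G.Walk b₁ b₂) :
    (p.boxProdRight H a).length = p.length :=
  p.length_map _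

@[simp]
lemma Walk.support_boxProdLeft {a₁ a₂ : α} (b : β) (p : H.Walk a₁ a₂) :
    (p.boxProdLeft G b).support = p.support.map (·, b) :=
  p.support_map _

@[simp]
lemma Walk.support_boxProdRight {b₁ b₂ : β} (a : α) (p : G.Walk b₁ b₂) :
    (p.boxProdRight H a).support = p.support.map (a, ·) :=
  p.support_map _

lemma dist_boxProd (hH : H.Preconnected) (hG : G.Preconnected) (x y : α × β) :
    (H □ G).dist x y = H.dist x.1 y.1 + G.dist x.2 y.2 := by
  rw [dist, dist, dist, edist_boxProd, ENat.toNat_add (edist_ne_top_iff_reachable.mpr (hH _ _))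
    (edist_ne_top_iff_reachable.mpr (hG _ _))]

/-- A walk through `z` from layer `i` back to layer `i` is longer than a geodesic by at least
`2 * H.dist i z.1`. -/
lemma Walk.fst_eq_of_length_eq_dist (hH : H.Preconnected) (hG : G.Preconnected) {i : α}
    {u v : β} {P : (H □ G).Walk (i, u) (i, v)} (hP : P.length = (H □ G).dist (i, u) (i, v))
    {z : α × β} (hz : z ∈ P.support) : z.1 = i := by
  classical
  have hsplit := congrArg Walk.length (P.take_spec hz)
  rw [Walk.length_append] at hsplit
  have hto := dist_le (P.takeUntil z hz)
  have hfrom := dist_le (P.dropUntil z hz)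
  rw [dist_boxProd hH hG] at hto hfrom hP
  have htri : G.dist u v ≤ G.dist u z.2 + G.dist z.2 v := (hG z.2 v).dist_triangle_right u
  have hzero : H.dist i z.1 = 0 := by
    rw [dist_comm (u := z.1)] at hfrom
    simp only [dist_self, zero_add] at hP hto hfrom
    omega
  exact ((hH i z.1).dist_eq_zero_iff.mp hzero).symm

lemma Walk.exists_walk_of_forall_fst_eq {i : α} {x y : α × β} (P : (H □ G).Walk x y)
    (hP : ∀ z ∈ P.support, z.1 = i) :
    ∃ q : G.Walk x.2 y.2, q.length = P.length ∧ ∀ w ∈ q.support, (i, w) ∈ P.support := by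
  induction P with
  | nil => exact ⟨.nil, rfl, fun w hw => by simp_all [Prod.ext_iff]⟩
  | @cons x z y e P ih =>
    obtain ⟨q, hql, hqP⟩ := ih fun w hw => hP w (by simp [hw])
    have hx : x.1 = i := hP x (by simp)
    have hz : z.1 = i := hP z (by simp)
    have hxz : G.Adj x.2 z.2 :=
      ((boxProd_adj.mp e).resolve_left fun h => h.1.ne (hx.trans hz.symm)).1
    refine ⟨.cons hxz q, by simp [hql], fun w hw => ?_⟩
    rcases List.mem_cons.mp hw with rfl | hw
    · simp [← hx]
    · simp [hqP w hw]

end SimpleGraph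

section

variable {α β : Type*} {H : SimpleGraph α} {G : SimpleGraph β}

lemma visiblePair_of_length_eq_dist {X : Set β} {u v : β} (p : G.Walk u v)
    (hp : p.length = G.dist u v) (hX : ∀ w ∈ p.support, w ∈ X → w = u ∨ w = v) :
    VisiblePair G X u v :=
  ⟨p, p.isPath_of_length_eq_dist hp, hp, hX⟩

lemma IsMVSet.preimage_mk (hH : H.Preconnected) (hG : G.Preconnected) {X : Set (α × β)}
    (hX : IsMVSet (H □ G) X) (i : α) : IsMVSet G (Prod.mk i ⁻¹' X) := by
  intro u hu v hv huv
  obtain ⟨P, -, hPl, hPX⟩ := hX _ hu _ hv (by simpa using huv)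
  obtain ⟨q, hql, hqP⟩ :=
    P.exists_walk_of_forall_fst_eq fun z hz => Walk.fst_eq_of_length_eq_dist hH hG hPl hz
  refine visiblePair_of_length_eq_dist q (by simp [hql, hPl, dist_boxProd hH hG]) fun w hw hwX => ?_
  simpa using hPX _ (hqP w hw) hwX

lemma ncard_le_sum_ncard_preimage_mk [Fintype α] [Finite β] (X : Set (α × β)) :
    X.ncard ≤ ∑ i, (Prod.mk i ⁻¹' X).ncard := calc
  X.ncard ≤ (⋃ i, Prod.mk i '' (Prod.mk i ⁻¹' X)).ncard :=
    Set.ncard_le_ncard (fun z hz => Set.mem_iUnion.mpr ⟨z.1, z.2, hz, rfl⟩) (Set.toFinite _)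
  _ ≤ ∑ i, (Prod.mk i '' (Prod.mk i ⁻¹' X)).ncard := Set.ncard_iUnion_le_of_fintype _
  _ = ∑ i, (Prod.mk i ⁻¹' X).ncard := by
    simp only [Set.ncard_image_of_injective _ (Prod.mk_right_injective _)]

lemma le_mu [Finite β] {X : Set β} (hX : IsMVSet G X) : X.ncard ≤ mu G :=
  le_csSup ⟨Nat.card β, by rintro n ⟨Y, -, rfl⟩; exact Set.ncard_le_card Y⟩
    ⟨X, hX, rfl⟩

lemma mu_le {n : ℕ} (h : ∀ X, IsMVSet G X → X.ncard ≤ n) : mu G ≤ n :=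
  csSup_le' <| by rintro _ ⟨X, hX, rfl⟩; exact h X hX

lemma exists_isMVSet_isIndep_ncard_eq_muI [Finite β] (G : SimpleGraph β) :
    ∃ X, IsMVSet G X ∧ IsIndep G X ∧ X.ncard = muI G :=
  Nat.sSup_mem (s := {n | ∃ X, IsMVSet G X ∧ IsIndep G X ∧ X.ncard = n})
    ⟨0, ∅, fun _ h => h.elim, fun _ h => h.elim, Set.ncard_empty _⟩
    ⟨Nat.card β, by rintro n ⟨Y, -, -, rfl⟩; exact Set.ncard_le_card Y⟩

theorem mu_boxProd_le [Fintype α] [Finite β] (hH : H.Preconnected) (hG : G.Preconnected) :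
    mu (H □ G) ≤ Fintype.card α * mu G := mu_le fun X hX => calc
  X.ncard ≤ ∑ i, (Prod.mk i ⁻¹' X).ncard := ncard_le_sum_ncard_preimage_mk X
  _ ≤ ∑ _i : α, mu G := Finset.sum_le_sum fun i _ => le_mu (hX.preimage_mk hH hG i)
  _ = Fintype.card α * mu G := by simp

lemma visiblePair_boxProd_of_ne (hH : H.Preconnected) (hG : G.Preconnected) {Y : Set β}
    (hY : IsMVSet G Y) (hYi : IsIndep G Y) {u v : β} (hu : u ∈ Y) (hv : v ∈ Y) (huv : u ≠ v)
    (i j : α) : VisiblePair (H □ G) (Set.univ ×ˢ Y) (i, u) (j, v) := by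
  obtain ⟨q, hqp, hql, hqY⟩ := hY u hu v hv huv
  obtain ⟨r, hr⟩ := (hH i j).exists_walk_length_eq_dist
  cases q with
  | nil => exact absurd rfl huv
  | @cons _ w _ huw q =>
  have hwY : w ∉ Y := fun h => hYi u hu w h huw
  have huq : u ∉ q.support := (Walk.cons_isPath_iff _ _).mp hqp |>.2
  refine visiblePair_of_length_eq_dist
    (.cons (boxProd_adj_right.mpr huw) ((r.boxProdLeft G w).append (q.boxProdRight H j))) ?_ ?_
  · simp only [Walk.length_cons] at hql
    simp only [Walk.length_cons, Walk.length_append, Walk.length_boxProdLeft,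
      Walk.length_boxProdRight, hr, dist_boxProd hH hG, ← hql]
    omega
  · intro z hz hzX
    simp only [Walk.support_cons, List.mem_cons, Walk.mem_support_append_iff,
      Walk.support_boxProdLeft, Walk.support_boxProdRight, List.mem_map] at hz
    rcases hz with rfl | ⟨a, -, rfl⟩ | ⟨s, hs, rfl⟩
    · exact .inl rfl
    · exact absurd hzX.2 hwY
    · obtain rfl | rfl := hqY s (List.mem_cons_of_mem _ hs) hzX.2
      · exact absurd hs huq
      · exact .inr rfl

theorem isMVSet_top_boxProd (hG : G.Preconnected) {Y : Set β} (hY : IsMVSet G Y)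
    (hYi : IsIndep G Y) : IsMVSet ((⊤ : SimpleGraph α) □ G) (Set.univ ×ˢ Y) := by
  rintro ⟨i, u⟩ ⟨-, hu⟩ ⟨j, v⟩ ⟨-, hv⟩ hne
  obtain rfl | huv := eq_or_ne u v
  · have hij : i ≠ j := by rintro rfl; exact hne rfl
    refine visiblePair_of_length_eq_dist (.cons (boxProd_adj_left.mpr hij) .nil) ?_ ?_
    · simp [dist_boxProd preconnected_top hG, dist_top_of_ne hij]
    · simp
  · exact visiblePair_boxProd_of_ne preconnected_top hG hY hYi hu hv huv i j

theorem card_mul_muI_le_mu_top_boxProd [Fintype α] [Finite β] (hG : G.Preconnected) :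
    Fintype.card α * muI G ≤ mu ((⊤ : SimpleGraph α) □ G) := by
  obtain ⟨Y, hY, hYi, hcard⟩ := exists_isMVSet_isIndep_ncard_eq_muI G
  calc Fintype.card α * muI G = (Set.univ ×ˢ Y).ncard := by
        rw [Set.ncard_prod, Set.ncard_univ, Nat.card_eq_fintype_card, hcard]
    _ ≤ mu ((⊤ : SimpleGraph α) □ G) := le_mu (isMVSet_top_boxProd hG hY hYi)

end

theorem stmt8_general {V : Type*} [Fintype V] (k : ℕ) (G : SimpleGraph V)
    (hconn : G.Connected) (h : mu G = muI G) :
    mu ((⊤ : SimpleGraph (Fin k)).boxProd G) = k * mu G := by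
  apply le_antisymm
  · simpa using mu_boxProd_le (α := Fin k) preconnected_top hconn.preconnected
  · simpa [h] using card_mul_muI_le_mu_top_boxProd (α := Fin k) hconn.preconnected

theorem stmt8 {V : Type*} [Fintype V] (k : ℕ) (hk : 2 ≤ k) (G : SimpleGraph V)
    (hconn : G.Connected) (h : mu G = muI G) :
    mu ((⊤ : SimpleGraph (Fin k)).boxProd G) = k * mu G :=
  stmt8_general k G hconn h
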